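/- The graph K_r^2, the subdivision of the complete graph K_r in which every edge is replaced by a path of length 3, contains every graph on at most r vertices as a pivot-minor. -/

import Mathlib

open SimpleGraph

/-- Sets `A`, `B` are complete to each other: disjoint with all edges between them. -/
def Complete {V : Type} (G : SimpleGraph V) (A B : Set V) : Prop :=
  Disjoint A B ∧ ∀ a ∈ A, ∀ b ∈ B, G.Adj a b

/-- Sets `A`, `B` are anticomplete: disjoint with no edges between them. -/
def Anticomplete {V : Type} (G : SimpleGraph V) (A B : Set V) : Prop :=
  Disjoint A B ∧ ∀ a ∈ A, ∀ b ∈ B, ¬ G.Adj a b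

/-- `V1 = N(u) \ N[v]`. -/
def sideA {V : Type} (G : SimpleGraph V) (u v : V) : Set V :=
  G.neighborSet u \ insert v (G.neighborSet v)

/-- `V2 = N(v) \ N[u]`. -/
def sideB {V : Type} (G : SimpleGraph V) (u v : V) : Set V :=
  G.neighborSet v \ insert u (G.neighborSet u)

/-- `V3 = N(u) ∩ N(v)`. -/
def sideC {V : Type} (G : SimpleGraph V) (u v : V) : Set V :=
  G.neighborSet u ∩ G.neighborSet v

/-- The pair `{a, b}` crosses one of the three pairs of sets `(V1,V2)`, `(V2,V3)`, `(V1,V3)`. -/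
def pivotCross {V : Type} (G : SimpleGraph V) (u v a b : V) : Prop :=
  (a ∈ sideA G u v ∧ b ∈ sideB G u v) ∨ (a ∈ sideB G u v ∧ b ∈ sideA G u v) ∨
  (a ∈ sideB G u v ∧ b ∈ sideC G u v) ∨ (a ∈ sideC G u v ∧ b ∈ sideB G u v) ∨
  (a ∈ sideA G u v ∧ b ∈ sideC G u v) ∨ (a ∈ sideC G u v ∧ b ∈ sideA G u v)

lemma pivotCross_comm {V : Type} {G : SimpleGraph V} {u v a b : V} :
    pivotCross G u v a b ↔ pivotCross G u v b a := by
  unfold pivotCross; tauto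

/-- The pivot `G ∧ uv`: complement the edges between each of the pairs `(V1,V2)`, `(V2,V3)`,
`(V1,V3)` and then swap the labels of `u` and `v`. -/
def pivotGraph {V : Type} (G : SimpleGraph V) (u v : V) : SimpleGraph V :=
  letI := Classical.decEq V
  { Adj := fun x y => x ≠ y ∧
      Xor' (G.Adj (Equiv.swap u v x) (Equiv.swap u v y))
        (pivotCross G u v (Equiv.swap u v x) (Equiv.swap u v y)),
    symm := ⟨by
      rintro x y ⟨hxy, h⟩
      refine ⟨hxy.symm, ?_⟩
      have h1 : G.Adj (Equiv.swap u v x) (Equiv.swap u v y) ↔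
          G.Adj (Equiv.swap u v y) (Equiv.swap u v x) := G.adj_comm _ _
      have h2 : pivotCross G u v (Equiv.swap u v x) (Equiv.swap u v y) ↔
          pivotCross G u v (Equiv.swap u v y) (Equiv.swap u v x) := pivotCross_comm
      unfold Xor' at h ⊢
      rw [← h1, ← h2]
      exact h⟩,
    loopless := ⟨fun _ h => h.1 rfl⟩ }

/-- `H` is a pivot-minor of `G`: `H` is obtainable from `G` (up to isomorphism) by a sequence of
vertex deletions and pivots of edges. -/
inductive IsPivotMinor : ∀ {W U : Type}, SimpleGraph W → SimpleGraph U → Prop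
  | of_iso {W U : Type} {H : SimpleGraph W} {G : SimpleGraph U} :
      Nonempty (H ≃g G) → IsPivotMinor H G
  | pivot {W U : Type} {H : SimpleGraph W} {G : SimpleGraph U} (u v : U) :
      G.Adj u v → IsPivotMinor H (pivotGraph G u v) → IsPivotMinor H G
  | delete {W U : Type} {H : SimpleGraph W} {G : SimpleGraph U} (s : Set U) :
      IsPivotMinor H (G.induce s) → IsPivotMinor H G

/-- `G` is obtained from `H` by replacing each edge `uv` of `H` with a path whose length satisfies
`P u v h`: there are internally disjoint induced paths of `G` joining the images of the branch
vertices, covering all of `G`, whose edges are exactly the edges of `G`. -/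
def IsEdgeReplacement {U W : Type} (H : SimpleGraph U)
    (P : ∀ u v : U, H.Adj u v → ℕ → Prop) (G : SimpleGraph W) : Prop :=
  ∃ (x : U ↪ W) (p : ∀ u v : U, H.Adj u v → G.Walk (x u) (x v)),
    (∀ u v h, (p u v h).IsPath) ∧
    (∀ u v h, P u v h (p u v h).length) ∧
    (∀ u v h, p v u h.symm = (p u v h).reverse) ∧
    (∀ u v h w, w ∈ (p u v h).support → w ∈ Set.range x → w = x u ∨ w = x v) ∧
    (∀ u v h k l h', s(u, v) ≠ s(k, l) →
      ∀ w, w ∈ (p u v h).support → w ∈ (p k l h').support → w ∈ Set.range x) ∧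
    (∀ w : W, w ∈ Set.range x ∨ ∃ u v h, w ∈ (p u v h).support) ∧
    (∀ a b : W, G.Adj a b ↔ ∃ u v h, (p u v h).toSubgraph.Adj a b)

/-- `G` is obtained from `H` by replacing each edge with a path whose length satisfies `P`. -/
def IsSubdivisionWith {U W : Type} (H : SimpleGraph U) (P : ℕ → Prop) (G : SimpleGraph W) : Prop :=
  IsEdgeReplacement H (fun _ _ _ n => P n) G

/-- An `F`-filleting of `G`: subdivide (at least once) every edge of `G` not in `F`, and do not
subdivide the edges of `F`. -/
def IsFilleting {U W : Type} (G F : SimpleGraph U) (H : SimpleGraph W) : Prop :=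
  IsEdgeReplacement G (fun u v _ n => (F.Adj u v ∧ n = 1) ∨ (¬ F.Adj u v ∧ 2 ≤ n)) H

/-- Join of `H` with a single new vertex (`H + K_1`), the new vertex being `none`. -/
def addApex {W : Type} (H : SimpleGraph W) : SimpleGraph (Option W) :=
  SimpleGraph.fromRel fun a b =>
    a = none ∨ ∃ u v : W, a = some u ∧ b = some v ∧ H.Adj u v

/-- `F` with ends `a`, `b` is a fuzzy odd path (with length satisfying `P`): it consists of an odd
path from `a` to `b` through all the vertices, possibly together with one extra edge `xy` between
two internal vertices such that `xy` lies in a triangle. -/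
def IsFuzzyOddPath {T : Type} (F : SimpleGraph T) (a b : T) (P : ℕ → Prop) : Prop :=
  ∃ p : F.Walk a b, p.IsPath ∧ Odd p.length ∧ P p.length ∧ (∀ t : T, t ∈ p.support) ∧
    ((∀ c d : T, F.Adj c d ↔ p.toSubgraph.Adj c d) ∨
      ∃ x y : T, x ∈ p.support ∧ y ∈ p.support ∧ x ≠ a ∧ x ≠ b ∧ y ≠ a ∧ y ≠ b ∧
        F.Adj x y ∧ ¬ p.toSubgraph.Adj x y ∧ (∃ z : T, F.Adj x z ∧ F.Adj y z) ∧
        (∀ c d : T, F.Adj c d ↔ (p.toSubgraph.Adj c d ∨ (c = x ∧ d = y) ∨ (c = y ∧ d = x))))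

/-- `G` is a proper fuzzy odd subdivision of `H`: `G` is obtained from `H` by replacing each edge
with a fuzzy odd path of (odd) length at least `3`. -/
def IsProperFuzzyOddSubdivision {U W : Type} (H : SimpleGraph U) (G : SimpleGraph W) : Prop :=
  ∃ (x : U ↪ W) (S : ∀ u v : U, H.Adj u v → Set W)
    (hS : ∀ u v h, x u ∈ S u v h ∧ x v ∈ S u v h),
    (∀ u v h, S v u h.symm = S u v h) ∧
    (∀ u v h w, w ∈ S u v h → w ∈ Set.range x → w = x u ∨ w = x v) ∧
    (∀ u v h k l h', s(u, v) ≠ s(k, l) → ∀ w, w ∈ S u v h → w ∈ S k l h' → w ∈ Set.range x) ∧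
    (∀ w : W, w ∈ Set.range x ∨ ∃ u v h, w ∈ S u v h) ∧
    (∀ a b : W, G.Adj a b → ∃ u v h, a ∈ S u v h ∧ b ∈ S u v h) ∧
    (∀ u v h, IsFuzzyOddPath (G.induce (S u v h))
      ⟨x u, (hS u v h).1⟩ ⟨x v, (hS u v h).2⟩ (fun n => 3 ≤ n))

/-- A mass on a graph `G`. -/
structure IsMass {V : Type} (G : SimpleGraph V) (μ : Set V → ℝ) : Prop where
  map_empty : μ ∅ = 0
  map_univ : μ Set.univ = 1
  mono : ∀ ⦃X Y : Set V⦄, X ⊆ Y → μ X ≤ μ Y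
  subadditive : ∀ X Y : Set V, μ (X ∪ Y) ≤ μ X + μ Y

/-- `N^r[v]`: the ball of radius `r` about `v`. -/
def ball {V : Type} (G : SimpleGraph V) (v : V) (r : ℕ) : Set V :=
  {w | ∃ p : G.Walk v w, p.length ≤ r}

/-- `(G, μ)` is `ε`-coherent. -/
def EpsCoherent {V : Type} (G : SimpleGraph V) (μ : Set V → ℝ) (ε : ℝ) : Prop :=
  (∀ v : V, μ {v} < ε) ∧ (∀ v : V, μ (G.neighborSet v) < ε) ∧
  ∀ A B : Set V, Anticomplete G A B → min (μ A) (μ B) < ε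

/-- `(G, μ)` is `(ε, r)`-coherent. -/
def EpsRCoherent {V : Type} (G : SimpleGraph V) (μ : Set V → ℝ) (ε : ℝ) (r : ℕ) : Prop :=
  (∀ v : V, μ (_root_.ball G v r) < ε) ∧
  ∀ A B : Set V, Anticomplete G A B → min (μ A) (μ B) < ε

/-- `(G, μ)` is `(δ, r)`-focused. -/
def Focused {V : Type} (G : SimpleGraph V) (μ : Set V → ℝ) (δ : ℝ) (r : ℕ) : Prop :=
  ∀ Z : Set V, δ ≤ μ Z → ∃ v : Z, μ Z / 2 ≤ μ (Subtype.val '' _root_.ball (G.induce Z) v r)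

/-- `N[X]`. -/
def closedNbhd {V : Type} (G : SimpleGraph V) (X : Set V) : Set V :=
  X ∪ {w | ∃ a ∈ X, G.Adj a w}

/-- `x` is an `r`-centre of `X`: every vertex of `X` is within distance `r` of `x` in `G[X]`. -/
def IsCentre {V : Type} (G : SimpleGraph V) (X : Set V) (x : V) (hx : x ∈ X) (r : ℕ) : Prop :=
  ∀ y : X, ∃ p : (G.induce X).Walk ⟨x, hx⟩ y, p.length ≤ r

/-- A leaf: a vertex of degree at most 1. -/
def IsLeaf {V : Type} (G : SimpleGraph V) (v : V) : Prop := (G.neighborSet v).Subsingleton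

/-- `P` is a path graph. -/
def IsPathGraph {U : Type} (P : SimpleGraph U) : Prop :=
  ∃ (a b : U) (w : P.Walk a b), w.IsPath ∧ (∀ u : U, u ∈ w.support) ∧
    ∀ x y : U, P.Adj x y ↔ w.toSubgraph.Adj x y

/-- A caterpillar: a tree `T` such that `T − L(T)` is a path. -/
def IsCaterpillar {U : Type} (T : SimpleGraph U) : Prop :=
  T.IsTree ∧ IsPathGraph (T.induce {v | ¬ IsLeaf T v})

/-- Disjoint union of `q` stars, each with `p` leaves: `(i, none)` is the centre of the `i`-th
star and `(i, some j)` its leaves. -/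
def starForest (q p : ℕ) : SimpleGraph (Fin q × Option (Fin p)) :=
  SimpleGraph.fromRel fun a b => a.1 = b.1 ∧ a.2 = none ∧ b.2 ≠ none

/-- The clique number `ω(G)`. -/
noncomputable def cliqueNumber {V : Type} [Fintype V] (G : SimpleGraph V) : ℕ :=
  sSup {n | ∃ s : Finset V, G.IsNClique n s}

/-- The independence number `α(G)`. -/
noncomputable def indepNumber {V : Type} [Fintype V] (G : SimpleGraph V) : ℕ :=
  cliqueNumber Gᶜ


/-!
In `K_r^2` any two branch vertices `x u`, `x v` are joined by a path `x u – a – b – x v` whose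
inner vertices have degree two. For the pivot on `ab` the three sides are `{x u}`, `{x v}` and `∅`,
so it toggles the single adjacency `x u x v` and leaves every other such path as it was. Placing
`U` on `|U|` of the branch vertices, pivoting the middle edge of the path of every edge of `J` and
deleting all other vertices therefore leaves a copy of `J`.
-/

section Pivot

variable {V : Type} {G : SimpleGraph V} {a b : V}

lemma pivotGraph_adj_of_ne {y z : V} (hya : y ≠ a) (hyb : y ≠ b) (hza : z ≠ a) (hzb : z ≠ b) :
    (pivotGraph G a b).Adj y z ↔ y ≠ z ∧ Xor (G.Adj y z) (pivotCross G a b y z) := by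
  let := Classical.decEq V
  change y ≠ z ∧ Xor (G.Adj (Equiv.swap a b y) (Equiv.swap a b z)) _ ↔ _
  rw [Equiv.swap_apply_of_ne_of_ne hya hyb, Equiv.swap_apply_of_ne_of_ne hza hzb]

lemma pivotGraph_neighborSet_of_not_adj {w : V} (hwa : w ≠ a) (hwb : w ≠ b)
    (ha : ¬ G.Adj a w) (hb : ¬ G.Adj b w) :
    (pivotGraph G a b).neighborSet w = G.neighborSet w := by
  let := Classical.decEq V
  have hcross : ∀ z, ¬ pivotCross G a b w z := by
    simp [pivotCross, sideA, sideB, sideC, ha, hb]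
  ext z
  change w ≠ z ∧ Xor (G.Adj (Equiv.swap a b w) (Equiv.swap a b z)) _ ↔ G.Adj w z
  rw [Equiv.swap_apply_of_ne_of_ne hwa hwb, Equiv.swap_apply_def]
  simp only [hcross]
  split_ifs with hza hzb <;> grind [G.adj_comm, G.ne_of_adj]

end Pivot

def IsGadget {V : Type} (G : SimpleGraph V) (p q a b : V) : Prop :=
  G.neighborSet a = {p, b} ∧ G.neighborSet b = {q, a}

namespace IsGadget

variable {V : Type} {G : SimpleGraph V} {p q a b : V}

lemma symm (h : IsGadget G p q a b) : IsGadget G q p b a := ⟨h.2, h.1⟩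

lemma adj_iff (h : IsGadget G p q a b) {y : V} : G.Adj a y ↔ y = p ∨ y = b := by
  rw [← mem_neighborSet, h.1]; rfl

lemma adj (h : IsGadget G p q a b) : G.Adj a b := h.adj_iff.2 (Or.inr rfl)

lemma pivotCross_iff (h : IsGadget G p q a b) (hpb : p ≠ b) (hqa : q ≠ a) (hpq : p ≠ q)
    {y z : V} : pivotCross G a b y z ↔ s(y, z) = s(p, q) := by
  have hpa : p ≠ a := (h.adj_iff.2 (Or.inl rfl)).ne'
  have hqb : q ≠ b := (h.symm.adj_iff.2 (Or.inl rfl)).ne'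
  have hab : a ≠ b := h.adj.ne
  simp only [pivotCross, sideA, sideB, sideC, h.1, h.2, Sym2.eq_iff, Set.mem_sdiff,
    Set.mem_inter_iff, Set.mem_insert_iff, Set.mem_singleton_iff]
  grind

lemma pivotGraph {p' q' a' b' : V} (h : IsGadget G p q a b) (h' : IsGadget G p' q' a' b')
    (ha' : a' ∉ ({p, q, a, b} : Set V)) (hb' : b' ∉ ({p, q, a, b} : Set V)) :
    IsGadget (pivotGraph G a b) p' q' a' b' := by
  have hfix {w : V} (hw : w ∉ ({p, q, a, b} : Set V)) :
      (_root_.pivotGraph G a b).neighborSet w = G.neighborSet w := by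
    simp only [Set.mem_insert_iff, Set.mem_singleton_iff, not_or] at hw
    exact pivotGraph_neighborSet_of_not_adj hw.2.2.1 hw.2.2.2 (by rw [h.adj_iff]; tauto)
      (by rw [h.symm.adj_iff]; tauto)
  rw [IsGadget, hfix ha', hfix hb']
  exact h'

lemma left_unique {S : Set V} {p' q' b' : V} (h : IsGadget G p q a b) (h' : IsGadget G p' q' a b')
    (hp : p ∈ S) (hp' : p' ∈ S) (hq' : q' ∈ S) (ha : a ∉ S) (hb : b ∉ S) (hb' : b' ∉ S) :
    p' = p ∧ q' = q := by
  have hp'p : p' = p := by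
    have := h.adj_iff.1 (h'.adj_iff.2 (Or.inl rfl))
    exact this.resolve_right (by rintro rfl; exact hb hp')
  have hb'b : b' = b := by
    have := h.adj_iff.1 (h'.adj_iff.2 (Or.inr rfl))
    exact this.resolve_left (by rintro rfl; exact hb' hp)
  subst hb'b
  refine ⟨hp'p, (h.symm.adj_iff.1 (h'.symm.adj_iff.2 (Or.inl rfl))).resolve_right ?_⟩
  rintro rfl
  exact ha hq'

end IsGadget

lemma SimpleGraph.Walk.IsPath.getVert_notMem {W : Type} {G : SimpleGraph W} {s t : W}
    {q : G.Walk s t} (hq : q.IsPath) {S : Set W} (hS : ∀ w ∈ q.support, w ∈ S → w = s ∨ w = t)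
    {n : ℕ} (h0 : 0 < n) (hn : n < q.length) : q.getVert n ∉ S := by
  intro hmem
  have hinj {m : ℕ} (hm : m ≤ q.length) (h : q.getVert n = q.getVert m) : n = m :=
    hq.getVert_injOn (Set.mem_ofPred.2 hn.le) (Set.mem_ofPred.2 hm) h
  rcases hS _ (q.getVert_mem_support n) hmem with h | h
  · exact h0.ne' (hinj (Nat.zero_le _) (h.trans q.getVert_zero.symm))
  · exact hn.ne (hinj le_rfl (h.trans q.getVert_length.symm))

lemma neighborSet_eq_toSubgraph_neighborSet {U W : Type} {H : SimpleGraph U} {G : SimpleGraph W}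
    (x : U ↪ W) (p : ∀ u v : U, H.Adj u v → G.Walk (x u) (x v))
    (hrev : ∀ u v h, p v u h.symm = (p u v h).reverse)
    (hdisj : ∀ u v h k l h', s(u, v) ≠ s(k, l) →
      ∀ w, w ∈ (p u v h).support → w ∈ (p k l h').support → w ∈ Set.range x)
    (hadj : ∀ a b : W, G.Adj a b ↔ ∃ u v h, (p u v h).toSubgraph.Adj a b)
    {u v : U} (huv : H.Adj u v) {w : W} (hw : w ∈ (p u v huv).support) (hwx : w ∉ Set.range x) :
    G.neighborSet w = (p u v huv).toSubgraph.neighborSet w := by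
  ext z
  refine ⟨fun hz => ?_, fun hz => (hadj w z).2 ⟨u, v, huv, hz⟩⟩
  obtain ⟨k, l, hkl, hz⟩ := (hadj w z).1 hz
  obtain ⟨rfl, rfl⟩ | ⟨rfl, rfl⟩ : (k = u ∧ l = v) ∨ (k = v ∧ l = u) := by
    rw [← Sym2.eq_iff]
    by_contra hne
    exact hwx (hdisj u v huv k l hkl (Ne.symm hne) w hw (Walk.mem_support_of_adj_toSubgraph hz))
  · exact hz
  · rwa [hrev, Walk.toSubgraph_reverse] at hz

structure RealizesWithGadgets {ι W : Type} (x : ι ↪ W) (G : SimpleGraph W) (D : SimpleGraph ι) :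
    Prop where
  comap_eq : G.comap x = D
  exists_gadget : ∀ ⦃u v : ι⦄, u ≠ v → ¬ D.Adj u v →
    ∃ a b, a ∉ Set.range x ∧ b ∉ Set.range x ∧ IsGadget G (x u) (x v) a b

namespace RealizesWithGadgets

variable {ι W : Type} {x : ι ↪ W} {G : SimpleGraph W} {D : SimpleGraph ι}

lemma comp {κ : Type} (h : RealizesWithGadgets x G D) (f : κ ↪ ι) :
    RealizesWithGadgets (f.trans x) G (D.comap f) where
  comap_eq := by rw [← h.comap_eq]; rfl
  exists_gadget u v huv hD := by
    obtain ⟨a, b, ha, hb, hg⟩ := h.exists_gadget (f.injective.ne huv) hD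
    exact ⟨a, b, fun ⟨i, hi⟩ => ha ⟨f i, hi⟩, fun ⟨i, hi⟩ => hb ⟨f i, hi⟩, hg⟩

lemma gadgets_disjoint {u v u' v' : ι} {a b a' b' : W}
    (hg : IsGadget G (x u) (x v) a b) (hg' : IsGadget G (x u') (x v') a' b')
    (ha : a ∉ Set.range x) (hb : b ∉ Set.range x) (ha' : a' ∉ Set.range x)
    (hb' : b' ∉ Set.range x) (hne : s(u', v') ≠ s(u, v)) :
    a' ≠ a ∧ a' ≠ b ∧ b' ≠ a ∧ b' ≠ b := by
  have hx : ∀ i, x i ∈ Set.range x := Set.mem_range_self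
  refine ⟨?_, ?_, ?_, ?_⟩ <;> rintro rfl
  · obtain ⟨h1, h2⟩ := hg.left_unique hg' (hx _) (hx _) (hx _) ha' hb hb'
    exact hne (by rw [x.injective h1, x.injective h2])
  · obtain ⟨h1, h2⟩ := hg.symm.left_unique hg' (hx _) (hx _) (hx _) ha' ha hb'
    exact hne (by rw [x.injective h1, x.injective h2, Sym2.eq_swap])
  · obtain ⟨h1, h2⟩ := hg.left_unique hg'.symm (hx _) (hx _) (hx _) hb' hb ha'
    exact hne (by rw [x.injective h1, x.injective h2, Sym2.eq_swap])
  · obtain ⟨h1, h2⟩ := hg.symm.left_unique hg'.symm (hx _) (hx _) (hx _) hb' ha ha'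
    exact hne (by rw [x.injective h1, x.injective h2])

lemma exists_pivot (h : RealizesWithGadgets x G D) {u v : ι} (huv : u ≠ v) (hD : ¬ D.Adj u v) :
    ∃ a b, G.Adj a b ∧ RealizesWithGadgets x (pivotGraph G a b) (D ⊔ edge u v) := by
  obtain ⟨a, b, ha, hb, hg⟩ := h.exists_gadget huv hD
  have hxa (i : ι) : x i ≠ a := fun h => ha ⟨i, h⟩
  have hxb (i : ι) : x i ≠ b := fun h => hb ⟨i, h⟩
  have hcross {y z : W} : pivotCross G a b y z ↔ s(y, z) = s(x u, x v) :=
    hg.pivotCross_iff (hxb u) (hxa v) (x.injective.ne huv)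
  refine ⟨a, b, hg.adj, ⟨?_, ?_⟩⟩
  · ext i j
    have hDij : G.Adj (x i) (x j) ↔ D.Adj i j := by rw [← h.comap_eq]; rfl
    rw [comap_adj, pivotGraph_adj_of_ne (hxa i) (hxb i) (hxa j) (hxb j), hcross, hDij,
      ← Sym2.map_mk, ← Sym2.map_mk, (Sym2.map.injective x.injective).eq_iff,
      x.injective.ne_iff, sup_adj, edge_adj, Sym2.eq_iff]
    have hDne := D.ne_of_adj (a := i) (b := j)
    have hDvu := D.adj_symm (u := v) (v := u)
    grind
  · intro u' v' hne hD'
    rw [sup_adj, not_or, edge_adj] at hD'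
    obtain ⟨a', b', ha', hb', hg'⟩ := h.exists_gadget hne hD'.1
    have hs : s(u', v') ≠ s(u, v) := by rw [Ne, Sym2.eq_iff]; tauto
    obtain ⟨h1, h2, h3, h4⟩ := gadgets_disjoint hg hg' ha hb ha' hb' hs
    refine ⟨a', b', ha', hb', hg.pivotGraph hg' ?_ ?_⟩ <;>
      simp only [Set.mem_insert_iff, Set.mem_singleton_iff, not_or]
    · exact ⟨fun h => ha' ⟨u, h.symm⟩, fun h => ha' ⟨v, h.symm⟩, h1, h2⟩
    · exact ⟨fun h => hb' ⟨u, h.symm⟩, fun h => hb' ⟨v, h.symm⟩, h3, h4⟩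

lemma exists_isPivotMinor_of_le [Finite ι] (h : RealizesWithGadgets x G D) {D' : SimpleGraph ι}
    (hDD' : D ≤ D') : ∃ G' : SimpleGraph W, G'.comap x = D' ∧
      ∀ {T : Type} {J : SimpleGraph T}, IsPivotMinor J G' → IsPivotMinor J G := by
  induction D using WellFoundedGT.induction generalizing G with
  | _ D ih =>
    obtain rfl | hlt := hDD'.eq_or_lt
    · exact ⟨G, h.comap_eq, id⟩
    obtain ⟨u, v, huv, hD⟩ : ∃ u v, D'.Adj u v ∧ ¬ D.Adj u v := by
      by_contra! hcon
      exact hlt.not_ge fun u v => hcon u v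
    obtain ⟨a, b, hab, hpivot⟩ := h.exists_pivot huv.ne hD
    obtain ⟨G', hG', hminor⟩ := ih _ (lt_sup_edge _ _ _ huv.ne hD) hpivot
      (sup_le hDD' ((edge_le_iff _).2 (Or.inr huv)))
    exact ⟨G', hG', fun hJ => .pivot a b hab (hminor hJ)⟩

end RealizesWithGadgets

lemma exists_realizesWithGadgets_bot {ι W : Type} {G : SimpleGraph W}
    (hG : IsSubdivisionWith (⊤ : SimpleGraph ι) (fun n => n = 3) G) :
    ∃ x : ι ↪ W, RealizesWithGadgets x G ⊥ := by
  obtain ⟨x, p, hpath, hlen, hrev, hint, hdisj, -, hadj⟩ := hG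
  have hinner {u v : ι} (h : (⊤ : SimpleGraph ι).Adj u v) {n : ℕ} (h0 : 0 < n) (h3 : n < 3) :
      (p u v h).getVert n ∉ Set.range x :=
    (hpath u v h).getVert_notMem (hint u v h) h0 (by rwa [hlen u v h])
  have hnbhd {u v : ι} (h : (⊤ : SimpleGraph ι).Adj u v) {n : ℕ} (h0 : 0 < n) (h3 : n < 3) :
      G.neighborSet ((p u v h).getVert n) =
        {(p u v h).getVert (n - 1), (p u v h).getVert (n + 1)} := by
    rw [neighborSet_eq_toSubgraph_neighborSet x p hrev hdisj hadj h (Walk.getVert_mem_support _ _)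
      (hinner h h0 h3), (hpath u v h).neighborSet_toSubgraph_internal h0.ne' (by rwa [hlen u v h])]
  refine ⟨x, ?_, fun u v huv _ => ?_⟩
  · ext i j
    simp only [comap_adj, bot_adj, iff_false]
    intro hij
    obtain ⟨u, v, h, hT⟩ := (hadj _ _).1 hij
    obtain ⟨n, hn, hlt⟩ := (Walk.toSubgraph_adj_iff _).1 hT
    rw [hlen u v h] at hlt
    have hterminal {m : ℕ} (hm : m = n ∨ m = n + 1) : (p u v h).getVert m ∈ Set.range x := by
      have : (p u v h).getVert m ∈ s(x i, x j) := hn ▸ by rcases hm with rfl | rfl <;> simp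
      rcases Sym2.mem_iff.1 this with h' | h' <;> exact ⟨_, h'.symm⟩
    rcases Nat.eq_zero_or_pos n with rfl | h0
    · exact hinner h one_pos (by norm_num) (hterminal (Or.inr rfl))
    · exact hinner h h0 hlt (hterminal (Or.inl rfl))
  · have h : (⊤ : SimpleGraph ι).Adj u v := huv
    refine ⟨_, _, hinner h one_pos (by norm_num), hinner h two_pos (by norm_num), ?_, ?_⟩
    · simpa using hnbhd h one_pos (by norm_num)
    · have hend : (p u v h).getVert 3 = x v := (p u v h).getVert_of_length_le (hlen u v h).le
      rw [Set.pair_comm]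
      simpa [hend] using hnbhd h two_pos (by norm_num)

theorem Krsq_contains_all_pivot_minors_general (r : ℕ) {W : Type} (G : SimpleGraph W)
    (hG : IsSubdivisionWith (⊤ : SimpleGraph (Fin r)) (fun n => n = 3) G)
    {U : Type} [Fintype U] (J : SimpleGraph U) (hU : Fintype.card U ≤ r) :
    IsPivotMinor J G := by
  obtain ⟨x, hx⟩ := exists_realizesWithGadgets_bot hG
  obtain ⟨f⟩ : Nonempty (U ↪ Fin r) :=
    Function.Embedding.nonempty_of_card_le (by simpa using hU)
  obtain ⟨G', hG', hminor⟩ := (hx.comp f).exists_isPivotMinor_of_le (bot_le : ⊥ ≤ J)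
  subst hG'
  exact hminor (.delete _ (.of_iso ⟨(Embedding.comap (f.trans x) G').isoInduceRange⟩))

/-- `K_r^2` (each edge of `K_r` replaced by a path of length 3) contains every graph
on at most `r` vertices as a pivot-minor. -/
theorem Krsq_contains_all_pivot_minors (r : ℕ) {W : Type} [Fintype W] (G : SimpleGraph W)
    (hG : IsSubdivisionWith (⊤ : SimpleGraph (Fin r)) (fun n => n = 3) G)
    {U : Type} [Fintype U] (J : SimpleGraph U) (hU : Fintype.card U ≤ r) :
    IsPivotMinor J G :=
  Krsq_contains_all_pivot_minors_general r G hG J hU
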